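/- Balanced batches prevent trivial collapse: for any natural numbers n₀ and n₁ with n₁ ≥ 1 (n₀ the number of in-class samples and n₁ the number of out-of-class samples in a batch), the batch-average HyperCore loss as a function of a common embedding norm r, namely F(r) = (1/(n₀ + n₁)) · (n₀ · h(r) + n₁ · L(r)), tends to +∞ as r tends to 0 from the right. -/

import Mathlib

/-- The pseudo-Huber loss `h(a) = √(a² + 1) − 1`. -/
noncomputable def pseudoHuber (a : ℝ) : ℝ := Real.sqrt (a ^ 2 + 1) - 1

/-- The HyperCore out-of-class loss `L(a) = −log(1 − exp(−h(a)))`. -/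
noncomputable def hyperCoreOut (a : ℝ) : ℝ :=
  -Real.log (1 - Real.exp (-(pseudoHuber a)))

/-!
As `r → 0⁺`, the in-class term `h(r)` stays bounded (it tends to `h(0) = 0`), while `h(r) → 0⁺`
forces `1 − exp(−h(r)) → 0⁺` and hence `L(r) = −log(1 − exp(−h(r))) → +∞`. A single
out-of-class sample therefore already drives the positive-weighted average to `+∞`.
-/

open Filter Topology Set Real

theorem continuous_pseudoHuber : Continuous pseudoHuber := by
  unfold pseudoHuber
  fun_prop

theorem pseudoHuber_zero : pseudoHuber 0 = 0 := by
  simp [pseudoHuber]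

theorem pseudoHuber_pos {a : ℝ} (ha : a ≠ 0) : 0 < pseudoHuber a := by
  have : 1 < √(a ^ 2 + 1) := by
    rw [lt_sqrt zero_le_one]
    linarith [(by positivity : 0 < a ^ 2)]
  unfold pseudoHuber
  linarith

theorem tendsto_pseudoHuber_nhdsNE_zero : Tendsto pseudoHuber (𝓝[≠] 0) (𝓝[>] 0) := by
  refine tendsto_nhdsWithin_of_tendsto_nhds_of_eventually_within _ ?_ ?_
  · simpa only [pseudoHuber_zero] using continuous_pseudoHuber.continuousAt.tendsto.mono_left
      (nhdsWithin_le_nhds (a := (0 : ℝ)))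
  · filter_upwards [self_mem_nhdsWithin] with a ha using pseudoHuber_pos ha

theorem tendsto_one_sub_exp_neg_nhdsGT_zero :
    Tendsto (fun x : ℝ => 1 - exp (-x)) (𝓝[>] 0) (𝓝[>] 0) := by
  refine tendsto_nhdsWithin_of_tendsto_nhds_of_eventually_within _ ?_ ?_
  · have : Continuous (fun x : ℝ => 1 - exp (-x)) := by fun_prop
    simpa using this.continuousAt.tendsto.mono_left (nhdsWithin_le_nhds (a := (0 : ℝ)))
  · filter_upwards [self_mem_nhdsWithin] with x hx
    simpa [mem_Ioi] using exp_lt_one_iff.mpr (neg_lt_zero.mpr hx)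

theorem tendsto_hyperCoreOut_nhdsNE_zero : Tendsto hyperCoreOut (𝓝[≠] 0) atTop :=
  tendsto_neg_atTop_iff.mpr <| tendsto_log_nhdsGT_zero.comp <|
    tendsto_one_sub_exp_neg_nhdsGT_zero.comp tendsto_pseudoHuber_nhdsNE_zero

/-- Balanced batches prevent trivial collapse: with `n₀` in-class samples and `n₁ ≥ 1`
out-of-class samples, the batch-average HyperCore loss
`F(r) = (1/(n₀ + n₁)) · (n₀ · h(r) + n₁ · L(r))` tends to `+∞` as `r → 0⁺`. -/
theorem batchAvg_hyperCore_tendsto_atTop (n₀ n₁ : ℕ) (hn₁ : 1 ≤ n₁) :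
    Filter.Tendsto
      (fun r : ℝ =>
        (1 / ((n₀ : ℝ) + (n₁ : ℝ))) *
          ((n₀ : ℝ) * pseudoHuber r + (n₁ : ℝ) * hyperCoreOut r))
      (nhdsWithin 0 (Set.Ioi 0)) Filter.atTop := by
  have hn₁_pos : (0 : ℝ) < n₁ := by exact_mod_cast hn₁
  have in_class : Tendsto (fun r => (n₀ : ℝ) * pseudoHuber r) (𝓝[>] 0) (𝓝 (n₀ * pseudoHuber 0)) :=
    ((continuous_const.mul continuous_pseudoHuber).tendsto 0).mono_left nhdsWithin_le_nhds
  have out_class : Tendsto (fun r => (n₁ : ℝ) * hyperCoreOut r) (𝓝[>] 0) atTop :=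
    (tendsto_hyperCoreOut_nhdsNE_zero.mono_left
      (nhdsWithin_mono 0 fun _ hr => ne_of_gt hr)).const_mul_atTop hn₁_pos
  exact (in_class.add_atTop out_class).const_mul_atTop (by positivity)
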